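/- arXiv:2301.09214 — 3 statements merged into one kernel-verified Lean document; each statement's English description precedes it below -/
import Mathlib

section
/- There exist a sequence of controls (u_k)_{k∈ℕ} and a random variable U* : Ω → ℝ such that: (i) P-almost surely the sequence of real numbers J(u_k)(ω) is nonincreasing in k; (ii) J(u_k) → U* P-almost surely as k → ∞; and (iii) for every control u one has U* ≤ J(u) P-almost surely. That is, the essential infimum over all controls of the random actions J(u) is attained as an almost sure decreasing limit along a sequence of controls. -/
open MeasureTheory Set Filter

/-- The controlled path `Z_s = x + ∫_t^s u(r) dr + √ν (W(s) - W(t))`. -/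
noncomputable def ctrlPath {n : ℕ} (ν : ℝ) (W : ℝ → EuclideanSpace ℝ (Fin n))
    (t : ℝ) (x : EuclideanSpace ℝ (Fin n)) (u : ℝ → EuclideanSpace ℝ (Fin n))
    (s : ℝ) : EuclideanSpace ℝ (Fin n) :=
  x + (∫ r in t..s, u r) + Real.sqrt ν • (W s - W t)

/-- The pathwise action `J(t,x,u)` along the path `W`. -/
noncomputable def action {n : ℕ} (T ν : ℝ) (W : ℝ → EuclideanSpace ℝ (Fin n))
    (V S : EuclideanSpace ℝ (Fin n) → ℝ) (t : ℝ) (x : EuclideanSpace ℝ (Fin n))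
    (u : ℝ → EuclideanSpace ℝ (Fin n)) : ℝ :=
  (∫ s in t..T, (‖u s‖ ^ 2 / 2 + V (ctrlPath ν W t x u s))) + S (ctrlPath ν W t x u T)

/-- A (random) control: jointly measurable and uniformly bounded by `C`. -/
def IsRandControl {n : ℕ} {Ω : Type*} [MeasurableSpace Ω] (C : ℝ)
    (u : Ω → ℝ → EuclideanSpace ℝ (Fin n)) : Prop :=
  (Measurable fun p : Ω × ℝ => u p.1 p.2) ∧ ∀ ω s, ‖u ω s‖ ≤ C

open Classical in
/-- Combine two random controls on a set `A` of sample points. -/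
noncomputable def combc {n : ℕ} {Ω : Type*} (A : Set Ω)
    (u v : Ω → ℝ → EuclideanSpace ℝ (Fin n)) : Ω → ℝ → EuclideanSpace ℝ (Fin n) :=
  fun ω => if ω ∈ A then u ω else v ω

lemma isRandControl_combc {n : ℕ} {Ω : Type*} [MeasurableSpace Ω] {C : ℝ} {A : Set Ω}
    (hA : MeasurableSet A) {u v : Ω → ℝ → EuclideanSpace ℝ (Fin n)}
    (hu : IsRandControl C u) (hv : IsRandControl C v) :
    IsRandControl C (combc A u v) := by
  classical
  constructor
  · have : (fun p : Ω × ℝ => combc A u v p.1 p.2) =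
        fun p : Ω × ℝ => if p.1 ∈ A then u p.1 p.2 else v p.1 p.2 := by
      funext p
      simp only [combc]
      by_cases h : p.1 ∈ A <;> simp [h]
    rw [this]
    exact Measurable.ite (measurable_fst hA) hu.1 hv.1
  · intro ω s
    simp only [combc]
    by_cases h : ω ∈ A <;> simp [h, hu.2 ω s, hv.2 ω s]

/-- The recursively minimizing combination of a sequence of controls. -/
noncomputable def minSeq {n : ℕ} {Ω : Type*}
    (Jf : (Ω → ℝ → EuclideanSpace ℝ (Fin n)) → Ω → ℝ)
    (u0 : ℕ → Ω → ℝ → EuclideanSpace ℝ (Fin n)) :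
    ℕ → Ω → ℝ → EuclideanSpace ℝ (Fin n)
  | 0 => u0 0
  | (k + 1) => combc {ω | Jf (minSeq Jf u0 k) ω ≤ Jf (u0 (k + 1)) ω}
      (minSeq Jf u0 k) (u0 (k + 1))

/-- A uniform (in the control) lower bound for the action along a fixed path. -/
lemma action_lb {n : ℕ} (T ν C L_S Vbound : ℝ)
    (W : ℝ → EuclideanSpace ℝ (Fin n)) (hW : Continuous W)
    (V S : EuclideanSpace ℝ (Fin n) → ℝ)
    (hVcont : Continuous V)
    (hVbdd : ∀ y, |V y| ≤ Vbound)
    (hSlip : ∀ y y', |S y - S y'| ≤ L_S * ‖y - y'‖)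
    (t : ℝ) (htT : t ≤ T) (x : EuclideanSpace ℝ (Fin n))
    (u : ℝ → EuclideanSpace ℝ (Fin n)) (hu : Measurable u) (hub : ∀ s, ‖u s‖ ≤ C) :
    (t - T) * Vbound + (S (x + Real.sqrt ν • (W T - W t)) - |L_S| * (C * (T - t)))
      ≤ action T ν W V S t x u := by
  have hVb0 : 0 ≤ Vbound := le_trans (abs_nonneg _) (hVbdd x)
  have hC0 : 0 ≤ C := le_trans (norm_nonneg _) (hub 0)
  -- interval integrability of u
  have huint : ∀ a b : ℝ, IntervalIntegrable u MeasureTheory.volume a b := by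
    intro a b
    refine (intervalIntegrable_const (c := C)).mono_fun
      hu.aestronglyMeasurable.restrict (ae_of_all _ fun s => ?_)
    simpa [Real.norm_eq_abs, abs_of_nonneg hC0] using hub s
  -- continuity of the controlled path
  have hZcont : Continuous (ctrlPath ν W t x u) := by
    unfold ctrlPath
    exact (continuous_const.add (intervalIntegral.continuous_primitive huint t)).add
      (by fun_prop)
  -- integrand
  set f : ℝ → ℝ := fun s => ‖u s‖ ^ 2 / 2 + V (ctrlPath ν W t x u s) with hf
  have hfmeas : Measurable f := by
    exact ((hu.norm.pow measurable_const).div_const 2).add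
      ((hVcont.comp hZcont).measurable)
  have hfbd : ∀ s, |f s| ≤ C ^ 2 / 2 + Vbound := by
    intro s
    have h1 : ‖u s‖ ^ 2 ≤ C ^ 2 := by
      have := hub s
      nlinarith [norm_nonneg (u s)]
    have h2 := abs_le.1 (hVbdd (ctrlPath ν W t x u s))
    rw [abs_le]
    simp only [hf]
    constructor <;> nlinarith [sq_nonneg ‖u s‖]
  have hfint : IntervalIntegrable f MeasureTheory.volume t T := by
    refine (intervalIntegrable_const (c := C ^ 2 / 2 + Vbound)).mono_fun
      hfmeas.aestronglyMeasurable.restrict (ae_of_all _ fun s => ?_)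
    have : 0 ≤ C ^ 2 / 2 + Vbound := by positivity
    simpa [Real.norm_eq_abs, abs_of_nonneg this] using hfbd s
  -- integral lower bound
  have hIlb : (t - T) * Vbound ≤ ∫ s in t..T, f s := by
    have h1 : ∫ s in t..T, (-Vbound : ℝ) ≤ ∫ s in t..T, f s := by
      refine intervalIntegral.integral_mono_on htT intervalIntegrable_const hfint
        fun s _ => ?_
      have h2 := abs_le.1 (hVbdd (ctrlPath ν W t x u s))
      have : (0:ℝ) ≤ ‖u s‖ ^ 2 / 2 := by positivity
      simp only [hf]
      linarith [h2.1]
    rw [intervalIntegral.integral_const] at h1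
    calc (t - T) * Vbound = (T - t) • (-Vbound : ℝ) := by ring_nf
    _ ≤ _ := h1
  -- terminal cost lower bound
  set y0 : EuclideanSpace ℝ (Fin n) := x + Real.sqrt ν • (W T - W t) with hy0
  have hZT : ctrlPath ν W t x u T - y0 = ∫ r in t..T, u r := by
    simp only [ctrlPath, hy0]; abel
  have hnorm : ‖ctrlPath ν W t x u T - y0‖ ≤ C * (T - t) := by
    rw [hZT]
    have := intervalIntegral.norm_integral_le_of_norm_le_const
      (C := C) (f := u) (a := t) (b := T) (fun s _ => hub s)
    rwa [abs_of_nonneg (by linarith)] at this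
  have hSlb : S y0 - |L_S| * (C * (T - t)) ≤ S (ctrlPath ν W t x u T) := by
    have h1 : |S (ctrlPath ν W t x u T) - S y0| ≤ |L_S| * (C * (T - t)) := by
      calc |S (ctrlPath ν W t x u T) - S y0|
          ≤ L_S * ‖ctrlPath ν W t x u T - y0‖ := hSlip _ _
        _ ≤ |L_S| * ‖ctrlPath ν W t x u T - y0‖ :=
            mul_le_mul_of_nonneg_right (le_abs_self _) (norm_nonneg _)
        _ ≤ |L_S| * (C * (T - t)) :=
            mul_le_mul_of_nonneg_left hnorm (abs_nonneg _)
    have h2 := (abs_le.1 h1).1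
    linarith
  unfold action
  linarith

set_option maxHeartbeats 1000000 in
/-- there exist a sequence of controls `(u_k)` and a random variable `U*` such
that almost surely `J(u_k)` is nonincreasing in `k` and converges to `U*`, and `U* ≤ J(u)`
almost surely for every control `u`: the essential infimum of the random actions is attained
as an a.s. decreasing limit along a sequence of controls. -/
theorem statement2
    (n : ℕ) (hn : 1 ≤ n) (T ν C L_V L_S Vbound : ℝ)
    (hT : 0 < T) (hν : 0 < ν) (hC : 0 < C)
    (V S : EuclideanSpace ℝ (Fin n) → ℝ)
    (hVlip : ∀ y y', |V y - V y'| ≤ L_V * ‖y - y'‖)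
    (hVbdd : ∀ y, |V y| ≤ Vbound)
    (hSlip : ∀ y y', |S y - S y'| ≤ L_S * ‖y - y'‖)
    (Ω : Type*) [MeasurableSpace Ω] (P : Measure Ω) [IsProbabilityMeasure P]
    (W : Ω → ℝ → EuclideanSpace ℝ (Fin n))
    (hWmeas : Measurable fun p : Ω × ℝ => W p.1 p.2)
    (hWcont : ∀ ω, Continuous (W ω))
    (t : ℝ) (ht : t ∈ Icc 0 T) (x : EuclideanSpace ℝ (Fin n))
    (hJmeas : ∀ u : Ω → ℝ → EuclideanSpace ℝ (Fin n), IsRandControl C u →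
      Measurable fun ω => action T ν (W ω) V S t x (u ω)) :
    ∃ (useq : ℕ → Ω → ℝ → EuclideanSpace ℝ (Fin n)) (Ustar : Ω → ℝ),
      (∀ k, IsRandControl C (useq k)) ∧
      (∀ᵐ ω ∂P, ∀ k, action T ν (W ω) V S t x (useq (k + 1) ω) ≤
        action T ν (W ω) V S t x (useq k ω)) ∧
      (∀ᵐ ω ∂P, Tendsto (fun k => action T ν (W ω) V S t x (useq k ω)) atTop (nhds (Ustar ω))) ∧
      (∀ u : Ω → ℝ → EuclideanSpace ℝ (Fin n), IsRandControl C u →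
        ∀ᵐ ω ∂P, Ustar ω ≤ action T ν (W ω) V S t x (u ω)) := by
  classical
  set Jf : (Ω → ℝ → EuclideanSpace ℝ (Fin n)) → Ω → ℝ :=
    fun u ω => action T ν (W ω) V S t x (u ω) with hJfdef
  -- combination formula
  have hcomb : ∀ (A : Set Ω) (a b : Ω → ℝ → EuclideanSpace ℝ (Fin n)) (ω : Ω),
      Jf (combc A a b) ω = if ω ∈ A then Jf a ω else Jf b ω := by
    intro A a b ω
    simp only [hJfdef, combc]
    by_cases h : ω ∈ A <;> simp [h]
  have hcombmin : ∀ (a b : Ω → ℝ → EuclideanSpace ℝ (Fin n)) (ω : Ω),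
      Jf (combc {ω | Jf a ω ≤ Jf b ω} a b) ω = min (Jf a ω) (Jf b ω) := by
    intro a b ω
    rw [hcomb, min_def]
    by_cases h : Jf a ω ≤ Jf b ω <;> simp [h]
  -- continuity of V
  have hVcont : Continuous V := by
    refine (LipschitzWith.of_dist_le_mul (K := ⟨max L_V 0, le_max_right _ _⟩)
      (f := V) fun y y' => ?_).continuous
    rw [Real.dist_eq, dist_eq_norm]
    exact (hVlip y y').trans
      (mul_le_mul_of_nonneg_right (le_max_left _ _) (norm_nonneg _))
  -- lower bound function
  set glb : Ω → ℝ := fun ω => (t - T) * Vbound +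
    (S (x + Real.sqrt ν • (W ω T - W ω t)) - |L_S| * (C * (T - t))) with hglb
  have hL : ∀ (u : Ω → ℝ → EuclideanSpace ℝ (Fin n)), IsRandControl C u →
      ∀ ω, glb ω ≤ Jf u ω := by
    intro u hu ω
    exact action_lb T ν C L_S Vbound (W ω) (hWcont ω) V S hVcont hVbdd hSlip t ht.2 x
      (u ω) (hu.1.comp measurable_prodMk_left) (hu.2 ω)
  -- integrability of arctan ∘ J
  have harctanbd : ∀ r : ℝ, |Real.arctan r| ≤ Real.pi / 2 := fun r =>
    (abs_le.2 ⟨(Real.neg_pi_div_two_lt_arctan r).le, (Real.arctan_lt_pi_div_two r).le⟩)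
  have hint : ∀ u : Ω → ℝ → EuclideanSpace ℝ (Fin n), IsRandControl C u →
      Integrable (fun ω => Real.arctan (Jf u ω)) P := by
    intro u hu
    refine (integrable_const (Real.pi / 2)).mono'
      (Real.measurable_arctan.comp (hJmeas u hu)).aestronglyMeasurable
      (ae_of_all _ fun ω => ?_)
    simpa [Real.norm_eq_abs] using harctanbd (Jf u ω)
  set Φ : (Ω → ℝ → EuclideanSpace ℝ (Fin n)) → ℝ :=
    fun u => ∫ ω, Real.arctan (Jf u ω) ∂P with hΦdef
  set SVals : Set ℝ := {r | ∃ u, IsRandControl C u ∧ Φ u = r} with hSVals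
  have hzero : IsRandControl (Ω := Ω) C (fun _ _ => (0 : EuclideanSpace ℝ (Fin n))) :=
    ⟨measurable_const, fun ω s => by simp [hC.le]⟩
  have hne : SVals.Nonempty := ⟨Φ (fun _ _ => (0 : EuclideanSpace ℝ (Fin n))), ⟨_, hzero, rfl⟩⟩
  have hΦlb : ∀ u, IsRandControl C u → -(Real.pi / 2) ≤ Φ u := by
    intro u hu
    have h1 : ∫ (_ : Ω), -(Real.pi / 2) ∂P ≤ Φ u := by
      refine integral_mono (integrable_const _) (hint u hu) fun ω => ?_
      exact (abs_le.1 (harctanbd (Jf u ω))).1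
    simpa using h1
  have hbdd : BddBelow SVals := by
    refine ⟨-(Real.pi / 2), fun r hr => ?_⟩
    obtain ⟨u, hu, rfl⟩ := hr
    exact hΦlb u hu
  set m : ℝ := sInf SVals with hm
  have hm_le : ∀ u, IsRandControl C u → m ≤ Φ u := fun u hu =>
    csInf_le hbdd ⟨u, hu, rfl⟩
  -- choose an approximating sequence
  have hseq : ∀ k : ℕ, ∃ u, IsRandControl C u ∧ Φ u < m + 1 / (k + 1) := by
    intro k
    obtain ⟨r, hr, hrlt⟩ := Real.lt_sInf_add_pos hne
      (ε := 1 / (k + 1)) (by positivity)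
    obtain ⟨u, hu, rfl⟩ := hr
    exact ⟨u, hu, hrlt⟩
  choose u0 hu0c hu0Φ using hseq
  -- the decreasing minimizing sequence
  set w : ℕ → Ω → ℝ → EuclideanSpace ℝ (Fin n) := minSeq Jf u0 with hw
  have hwsucc : ∀ k, w (k + 1) =
      combc {ω | Jf (w k) ω ≤ Jf (u0 (k + 1)) ω} (w k) (u0 (k + 1)) := fun k => rfl
  have hwctrl : ∀ k, IsRandControl C (w k) := by
    intro k
    induction k with
    | zero => exact hu0c 0
    | succ k ih =>
      rw [hwsucc]
      exact isRandControl_combc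
        (measurableSet_le (hJmeas _ ih) (hJmeas _ (hu0c (k + 1)))) ih (hu0c (k + 1))
  have hwmin : ∀ k ω, Jf (w (k + 1)) ω = min (Jf (w k) ω) (Jf (u0 (k + 1)) ω) := by
    intro k ω
    rw [hwsucc]
    exact hcombmin _ _ ω
  have hwanti : ∀ ω, Antitone fun k => Jf (w k) ω := by
    intro ω
    refine antitone_nat_of_succ_le fun k => ?_
    rw [hwmin]
    exact min_le_left _ _
  have hwle : ∀ k ω, Jf (w k) ω ≤ Jf (u0 k) ω := by
    intro k ω
    cases k with
    | zero => exact le_refl _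
    | succ k => rw [hwmin]; exact min_le_right _ _
  -- the limit
  set Ustar : Ω → ℝ := fun ω => ⨅ k, Jf (w k) ω with hUstar
  have hBdd : ∀ ω, BddBelow (range fun k => Jf (w k) ω) := by
    intro ω
    refine ⟨glb ω, fun r hr => ?_⟩
    obtain ⟨k, rfl⟩ := hr
    exact hL (w k) (hwctrl k) ω
  have htend : ∀ ω, Tendsto (fun k => Jf (w k) ω) atTop (nhds (Ustar ω)) := fun ω =>
    tendsto_atTop_ciInf (hwanti ω) (hBdd ω)
  -- Φ (w k) → m
  have hΦwle : ∀ k, Φ (w k) ≤ Φ (u0 k) := by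
    intro k
    refine integral_mono (hint _ (hwctrl k)) (hint _ (hu0c k)) fun ω => ?_
    exact Real.arctan_strictMono.monotone (hwle k ω)
  have hΦwtend : Tendsto (fun k => Φ (w k)) atTop (nhds m) := by
    have hub : ∀ k : ℕ, Φ (w k) ≤ m + 1 / (k + 1) := fun k =>
      (hΦwle k).trans (hu0Φ k).le
    have hlb : ∀ k : ℕ, m ≤ Φ (w k) := fun k => hm_le _ (hwctrl k)
    have h2 : Tendsto (fun k : ℕ => m + 1 / ((k : ℝ) + 1)) atTop (nhds m) := by
      have := tendsto_const_nhds (x := m) (f := atTop (α := ℕ)) |>.add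
        tendsto_one_div_add_atTop_nhds_zero_nat
      simpa using this
    exact tendsto_of_tendsto_of_tendsto_of_le_of_le tendsto_const_nhds h2 hlb hub
  -- DCT : ∫ arctan Ustar = m
  have hFmeas : ∀ k, AEStronglyMeasurable (fun ω => Real.arctan (Jf (w k) ω)) P :=
    fun k => (Real.measurable_arctan.comp (hJmeas _ (hwctrl k))).aestronglyMeasurable
  have hFtendU : ∀ ω, Tendsto (fun k => Real.arctan (Jf (w k) ω)) atTop
      (nhds (Real.arctan (Ustar ω))) := fun ω =>
    (Real.continuous_arctan.tendsto _).comp (htend ω)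
  have hDCT : Tendsto (fun k => Φ (w k)) atTop
      (nhds (∫ ω, Real.arctan (Ustar ω) ∂P)) := by
    refine tendsto_integral_of_dominated_convergence (fun _ => Real.pi / 2) hFmeas
      (integrable_const _) (fun k => ae_of_all _ fun ω => ?_) (ae_of_all _ hFtendU)
    simpa [Real.norm_eq_abs] using harctanbd (Jf (w k) ω)
  have hIm : ∫ ω, Real.arctan (Ustar ω) ∂P = m := tendsto_nhds_unique hDCT hΦwtend
  have hUmeas : AEStronglyMeasurable (fun ω => Real.arctan (Ustar ω)) P :=
    aestronglyMeasurable_of_tendsto_ae atTop hFmeas (ae_of_all _ hFtendU)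
  have hUint : Integrable (fun ω => Real.arctan (Ustar ω)) P := by
    refine (integrable_const (Real.pi / 2)).mono' hUmeas (ae_of_all _ fun ω => ?_)
    simpa [Real.norm_eq_abs] using harctanbd (Ustar ω)
  refine ⟨w, Ustar, hwctrl, ae_of_all _ fun ω k => hwanti ω (Nat.le_succ k),
    ae_of_all _ htend, ?_⟩
  -- optimality
  intro u hu
  set v : ℕ → Ω → ℝ → EuclideanSpace ℝ (Fin n) := fun k =>
    combc {ω | Jf (w k) ω ≤ Jf u ω} (w k) u with hv
  have hvctrl : ∀ k, IsRandControl C (v k) := fun k =>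
    isRandControl_combc (measurableSet_le (hJmeas _ (hwctrl k)) (hJmeas _ hu))
      (hwctrl k) hu
  have hvmin : ∀ k ω, Jf (v k) ω = min (Jf (w k) ω) (Jf u ω) := fun k ω =>
    hcombmin _ _ ω
  have hGtend : ∀ ω, Tendsto (fun k => Real.arctan (Jf (v k) ω)) atTop
      (nhds (Real.arctan (min (Ustar ω) (Jf u ω)))) := by
    intro ω
    refine (Real.continuous_arctan.tendsto _).comp ?_
    have := (htend ω).min (tendsto_const_nhds (x := Jf u ω))
    simpa [hvmin] using this
  have hGmeas : ∀ k, AEStronglyMeasurable (fun ω => Real.arctan (Jf (v k) ω)) P :=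
    fun k => (Real.measurable_arctan.comp (hJmeas _ (hvctrl k))).aestronglyMeasurable
  have hDCT2 : Tendsto (fun k => Φ (v k)) atTop
      (nhds (∫ ω, Real.arctan (min (Ustar ω) (Jf u ω)) ∂P)) := by
    refine tendsto_integral_of_dominated_convergence (fun _ => Real.pi / 2) hGmeas
      (integrable_const _) (fun k => ae_of_all _ fun ω => ?_) (ae_of_all _ hGtend)
    simpa [Real.norm_eq_abs] using harctanbd (Jf (v k) ω)
  have hI2 : m ≤ ∫ ω, Real.arctan (min (Ustar ω) (Jf u ω)) ∂P :=
    ge_of_tendsto' hDCT2 fun k => hm_le _ (hvctrl k)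
  have hminmeas : AEStronglyMeasurable (fun ω => Real.arctan (min (Ustar ω) (Jf u ω))) P :=
    aestronglyMeasurable_of_tendsto_ae atTop hGmeas (ae_of_all _ hGtend)
  have hminint : Integrable (fun ω => Real.arctan (min (Ustar ω) (Jf u ω))) P := by
    refine (integrable_const (Real.pi / 2)).mono' hminmeas (ae_of_all _ fun ω => ?_)
    simpa [Real.norm_eq_abs] using harctanbd _
  -- the difference has zero integral and is nonneg
  have hdiffnn : (0 : Ω → ℝ) ≤ fun ω =>
      Real.arctan (Ustar ω) - Real.arctan (min (Ustar ω) (Jf u ω)) := by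
    intro ω
    have : min (Ustar ω) (Jf u ω) ≤ Ustar ω := min_le_left _ _
    simpa using Real.arctan_strictMono.monotone this
  have hdiffint : Integrable (fun ω =>
      Real.arctan (Ustar ω) - Real.arctan (min (Ustar ω) (Jf u ω))) P :=
    hUint.sub hminint
  have hdiffzero : ∫ ω, (Real.arctan (Ustar ω)
      - Real.arctan (min (Ustar ω) (Jf u ω))) ∂P = 0 := by
    rw [integral_sub hUint hminint, hIm]
    have h1 : ∫ ω, Real.arctan (min (Ustar ω) (Jf u ω)) ∂P ≤ m := by
      rw [← hIm]
      refine integral_mono hminint hUint fun ω => ?_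
      exact Real.arctan_strictMono.monotone (min_le_left _ _)
    linarith
  have hae := (integral_eq_zero_iff_of_nonneg hdiffnn hdiffint).1 hdiffzero
  filter_upwards [hae] with ω hω
  have h1 : Real.arctan (Ustar ω) = Real.arctan (min (Ustar ω) (Jf u ω)) := by
    have := hω
    simp only [Pi.zero_apply] at this
    linarith [this]
  have h2 : Ustar ω = min (Ustar ω) (Jf u ω) := Real.arctan_injective h1
  calc Ustar ω = min (Ustar ω) (Jf u ω) := h2
  _ ≤ Jf u ω := min_le_right _ _
end

section
/- The pathwise value function is Lipschitz continuous in the space variable, uniformly in time: for every t ∈ [0,T] and all x, x′ ∈ ℝⁿ, |U(t,x) − U(t,x′)| ≤ (L_V (T − t) + L_S) ‖x − x′‖. -/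
open MeasureTheory Set

/-- An admissible control: measurable and uniformly bounded by `C`. -/
def IsAdmissible {n : ℕ} (C : ℝ) (u : ℝ → EuclideanSpace ℝ (Fin n)) : Prop :=
  Measurable u ∧ ∀ s, ‖u s‖ ≤ C

/-- The pathwise value function `U(t,x) = inf { J(t,x,u) : u admissible }`. -/
noncomputable def value {n : ℕ} (T ν C : ℝ) (W : ℝ → EuclideanSpace ℝ (Fin n))
    (V S : EuclideanSpace ℝ (Fin n) → ℝ) (t : ℝ) (x : EuclideanSpace ℝ (Fin n)) : ℝ :=
  sInf {r | ∃ u : ℝ → EuclideanSpace ℝ (Fin n), IsAdmissible C u ∧ r = action T ν W V S t x u}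

/- Auxiliary lemmas -/

lemma lip_nonneg {n : ℕ} (hn : 1 ≤ n) {f : EuclideanSpace ℝ (Fin n) → ℝ} {L : ℝ}
    (h : ∀ y y', |f y - f y'| ≤ L * ‖y - y'‖) : 0 ≤ L := by
  set e : EuclideanSpace ℝ (Fin n) := EuclideanSpace.single ⟨0, hn⟩ (1 : ℝ) with he
  have hne : ‖(0 : EuclideanSpace ℝ (Fin n)) - e‖ = 1 := by
    simp [he, EuclideanSpace.norm_single]
  have := h 0 e
  rw [hne, mul_one] at this
  exact le_trans (abs_nonneg _) this

lemma ctrlPath_sub {n : ℕ} (ν : ℝ) (W : ℝ → EuclideanSpace ℝ (Fin n)) (t : ℝ)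
    (x x' : EuclideanSpace ℝ (Fin n)) (u : ℝ → EuclideanSpace ℝ (Fin n)) (s : ℝ) :
    ctrlPath ν W t x u s - ctrlPath ν W t x' u s = x - x' := by
  unfold ctrlPath; abel

lemma u_intInt {n : ℕ} {C : ℝ} {u : ℝ → EuclideanSpace ℝ (Fin n)}
    (hu : Measurable u) (hub : ∀ s, ‖u s‖ ≤ C) (a b : ℝ) :
    IntervalIntegrable u volume a b := by
  apply IntervalIntegrable.mono_fun (intervalIntegrable_const (c := C))
    hu.aestronglyMeasurable.restrict
  filter_upwards with s
  simpa using le_trans (hub s) (le_abs_self C)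

lemma integrand_intInt {n : ℕ} {T ν C : ℝ} {W : ℝ → EuclideanSpace ℝ (Fin n)}
    {V : EuclideanSpace ℝ (Fin n) → ℝ} {t : ℝ} {x : EuclideanSpace ℝ (Fin n)}
    {u : ℝ → EuclideanSpace ℝ (Fin n)} {Vbound : ℝ}
    (ht0 : 0 ≤ t) (htT : t ≤ T) (hW : ContinuousOn W (Icc 0 T))
    (hVc : Continuous V) (hVbdd : ∀ y, |V y| ≤ Vbound)
    (hu : Measurable u) (hub : ∀ s, ‖u s‖ ≤ C) :
    IntervalIntegrable (fun s => ‖u s‖ ^ 2 / 2 + V (ctrlPath ν W t x u s)) volume t T := by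
  rw [intervalIntegrable_iff_integrableOn_Ioc_of_le htT]
  have hsub : Ioc t T ⊆ Icc 0 T := fun s hs => ⟨le_trans ht0 (le_of_lt hs.1), hs.2⟩
  have hWm : AEStronglyMeasurable W (volume.restrict (Ioc t T)) :=
    ((hW.mono hsub).aemeasurable measurableSet_Ioc).aestronglyMeasurable
  have hprim : Continuous fun s => ∫ r in t..s, u r :=
    intervalIntegral.continuous_primitive (u_intInt hu hub) t
  have hZ : AEStronglyMeasurable (fun s => ctrlPath ν W t x u s)
      (volume.restrict (Ioc t T)) := by
    unfold ctrlPath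
    exact (aestronglyMeasurable_const.add hprim.aestronglyMeasurable.restrict).add
      ((hWm.sub aestronglyMeasurable_const).const_smul (Real.sqrt ν))
  have hmeas : AEStronglyMeasurable (fun s => ‖u s‖ ^ 2 / 2 + V (ctrlPath ν W t x u s))
      (volume.restrict (Ioc t T)) :=
    (((hu.norm.pow_const 2).div_const 2).aestronglyMeasurable.restrict).add
      (hVc.comp_aestronglyMeasurable hZ)
  apply Integrable.mono' (g := fun _ => C ^ 2 / 2 + Vbound)
    (integrableOn_const measure_Ioc_lt_top.ne) hmeas
  filter_upwards with s
  have h1 : ‖u s‖ ^ 2 ≤ C ^ 2 := by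
    have := hub s
    nlinarith [norm_nonneg (u s)]
  have h2 := hVbdd (ctrlPath ν W t x u s)
  have := abs_add_le (‖u s‖ ^ 2 / 2) (V (ctrlPath ν W t x u s))
  rw [Real.norm_eq_abs]
  have h3 : |‖u s‖ ^ 2 / 2| = ‖u s‖ ^ 2 / 2 := abs_of_nonneg (by positivity)
  linarith [this, h3.le, h3.ge]

lemma action_diff {n : ℕ} (hn : 1 ≤ n) {T ν C L_V L_S Vbound : ℝ}
    {W : ℝ → EuclideanSpace ℝ (Fin n)} {V S : EuclideanSpace ℝ (Fin n) → ℝ}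
    {t : ℝ} {x x' : EuclideanSpace ℝ (Fin n)} {u : ℝ → EuclideanSpace ℝ (Fin n)}
    (ht0 : 0 ≤ t) (htT : t ≤ T) (hW : ContinuousOn W (Icc 0 T))
    (hVc : Continuous V) (hVlip : ∀ y y', |V y - V y'| ≤ L_V * ‖y - y'‖)
    (hVbdd : ∀ y, |V y| ≤ Vbound)
    (hSlip : ∀ y y', |S y - S y'| ≤ L_S * ‖y - y'‖)
    (hu : Measurable u) (hub : ∀ s, ‖u s‖ ≤ C) :
    |action T ν W V S t x u - action T ν W V S t x' u| ≤ (L_V * (T - t) + L_S) * ‖x - x'‖ := by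
  have h1 := integrand_intInt (x := x) (ν := ν) ht0 htT hW hVc hVbdd hu hub
  have h2 := integrand_intInt (x := x') (ν := ν) ht0 htT hW hVc hVbdd hu hub
  have hsplit : action T ν W V S t x u - action T ν W V S t x' u =
      (∫ s in t..T, (V (ctrlPath ν W t x u s) - V (ctrlPath ν W t x' u s)))
      + (S (ctrlPath ν W t x u T) - S (ctrlPath ν W t x' u T)) := by
    unfold action
    have e1 : (∫ s in t..T, (‖u s‖ ^ 2 / 2 + V (ctrlPath ν W t x u s)))
        - (∫ s in t..T, (‖u s‖ ^ 2 / 2 + V (ctrlPath ν W t x' u s)))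
        = ∫ s in t..T, (V (ctrlPath ν W t x u s) - V (ctrlPath ν W t x' u s)) := by
      rw [← intervalIntegral.integral_sub h1 h2]
      apply intervalIntegral.integral_congr
      intro s _
      ring
    linarith
  rw [hsplit]
  have hint : |∫ s in t..T, (V (ctrlPath ν W t x u s) - V (ctrlPath ν W t x' u s))| ≤
      (L_V * ‖x - x'‖) * |T - t| := by
    rw [← Real.norm_eq_abs]
    apply intervalIntegral.norm_integral_le_of_norm_le_const
    intro s _
    rw [Real.norm_eq_abs]
    calc |V (ctrlPath ν W t x u s) - V (ctrlPath ν W t x' u s)|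
        ≤ L_V * ‖ctrlPath ν W t x u s - ctrlPath ν W t x' u s‖ := hVlip _ _
      _ = L_V * ‖x - x'‖ := by rw [ctrlPath_sub]
  have hS : |S (ctrlPath ν W t x u T) - S (ctrlPath ν W t x' u T)| ≤ L_S * ‖x - x'‖ := by
    calc |S (ctrlPath ν W t x u T) - S (ctrlPath ν W t x' u T)|
        ≤ L_S * ‖ctrlPath ν W t x u T - ctrlPath ν W t x' u T‖ := hSlip _ _
      _ = L_S * ‖x - x'‖ := by rw [ctrlPath_sub]
  rw [abs_of_nonneg (by linarith : (0:ℝ) ≤ T - t)] at hint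
  calc |_ + _| ≤ _ + _ := abs_add_le _ _
    _ ≤ (L_V * ‖x - x'‖) * (T - t) + L_S * ‖x - x'‖ := add_le_add hint hS
    _ = (L_V * (T - t) + L_S) * ‖x - x'‖ := by ring

lemma action_lower {n : ℕ} (hn : 1 ≤ n) {T ν C L_S Vbound : ℝ}
    {W : ℝ → EuclideanSpace ℝ (Fin n)} {V S : EuclideanSpace ℝ (Fin n) → ℝ}
    {t : ℝ} {x : EuclideanSpace ℝ (Fin n)} {u : ℝ → EuclideanSpace ℝ (Fin n)}
    (ht0 : 0 ≤ t) (htT : t ≤ T) (hW : ContinuousOn W (Icc 0 T))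
    (hVc : Continuous V) (hVbdd : ∀ y, |V y| ≤ Vbound)
    (hSlip : ∀ y y', |S y - S y'| ≤ L_S * ‖y - y'‖)
    (hLS : 0 ≤ L_S)
    (hu : Measurable u) (hub : ∀ s, ‖u s‖ ≤ C) :
    (T - t) * (-Vbound) + (S x - L_S * (C * (T - t) + Real.sqrt ν * ‖W T - W t‖))
      ≤ action T ν W V S t x u := by
  have hint := integrand_intInt (x := x) (ν := ν) ht0 htT hW hVc hVbdd hu hub
  have hlow : (T - t) * (-Vbound) ≤ ∫ s in t..T, (‖u s‖ ^ 2 / 2 + V (ctrlPath ν W t x u s)) := by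
    have := intervalIntegral.integral_mono_on htT (intervalIntegrable_const (c := -Vbound)) hint
      (fun s _ => by
        have := abs_le.1 (hVbdd (ctrlPath ν W t x u s))
        nlinarith [sq_nonneg ‖u s‖])
    simpa using this
  have hnormZ : ‖ctrlPath ν W t x u T - x‖ ≤ C * (T - t) + Real.sqrt ν * ‖W T - W t‖ := by
    have hd : ctrlPath ν W t x u T - x = (∫ r in t..T, u r) + Real.sqrt ν • (W T - W t) := by
      unfold ctrlPath; abel
    rw [hd]
    calc ‖(∫ r in t..T, u r) + Real.sqrt ν • (W T - W t)‖
        ≤ ‖∫ r in t..T, u r‖ + ‖Real.sqrt ν • (W T - W t)‖ := norm_add_le _ _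
      _ ≤ C * (T - t) + Real.sqrt ν * ‖W T - W t‖ := by
          apply add_le_add
          · have := intervalIntegral.norm_integral_le_of_norm_le_const
              (C := C) (fun s _ => hub s) (a := t) (b := T)
            rwa [abs_of_nonneg (by linarith : (0:ℝ) ≤ T - t)] at this
          · rw [norm_smul, Real.norm_eq_abs, abs_of_nonneg (Real.sqrt_nonneg ν)]
  have hSlow : S x - L_S * (C * (T - t) + Real.sqrt ν * ‖W T - W t‖) ≤ S (ctrlPath ν W t x u T) := by
    have h1 := abs_le.1 (hSlip x (ctrlPath ν W t x u T))
    have h2 : ‖x - ctrlPath ν W t x u T‖ = ‖ctrlPath ν W t x u T - x‖ := norm_sub_rev _ _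
    have h3 : L_S * ‖ctrlPath ν W t x u T - x‖ ≤
        L_S * (C * (T - t) + Real.sqrt ν * ‖W T - W t‖) :=
      mul_le_mul_of_nonneg_left hnormZ hLS
    rw [h2] at h1
    linarith [h1.1, h1.2]
  unfold action
  linarith


/-- the pathwise value function is Lipschitz in space, uniformly in time:
`|U(t,x) − U(t,x′)| ≤ (L_V (T − t) + L_S) ‖x − x′‖`. -/
theorem statement3
    (n : ℕ) (hn : 1 ≤ n) (T ν C L_V L_S Vbound : ℝ)
    (hT : 0 < T) (hν : 0 < ν) (hC : 0 < C)
    (W : ℝ → EuclideanSpace ℝ (Fin n)) (hW : ContinuousOn W (Icc 0 T))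
    (V S : EuclideanSpace ℝ (Fin n) → ℝ)
    (hVlip : ∀ y y', |V y - V y'| ≤ L_V * ‖y - y'‖)
    (hVbdd : ∀ y, |V y| ≤ Vbound)
    (hSlip : ∀ y y', |S y - S y'| ≤ L_S * ‖y - y'‖)
    (t : ℝ) (ht : t ∈ Icc 0 T) (x x' : EuclideanSpace ℝ (Fin n)) :
    |value T ν C W V S t x - value T ν C W V S t x'| ≤ (L_V * (T - t) + L_S) * ‖x - x'‖ := by
  obtain ⟨ht0, htT⟩ := ht
  have hLV : 0 ≤ L_V := lip_nonneg hn hVlip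
  have hLS : 0 ≤ L_S := lip_nonneg hn hSlip
  have hVc : Continuous V := by
    have : LipschitzWith (Real.toNNReal L_V) V := by
      apply LipschitzWith.of_dist_le_mul
      intro y y'
      rw [Real.dist_eq, dist_eq_norm, Real.coe_toNNReal _ hLV]
      exact hVlip y y'
    exact this.continuous
  -- sets are nonempty and bounded below
  have hne : ∀ y : EuclideanSpace ℝ (Fin n),
      {r | ∃ u, IsAdmissible C u ∧ r = action T ν W V S t y u}.Nonempty := by
    intro y
    exact ⟨action T ν W V S t y (fun _ => 0),
      ⟨fun _ => 0, ⟨measurable_const, fun s => by simp [hC.le]⟩, rfl⟩⟩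
  have hbdd : ∀ y : EuclideanSpace ℝ (Fin n),
      BddBelow {r | ∃ u, IsAdmissible C u ∧ r = action T ν W V S t y u} := by
    intro y
    refine ⟨(T - t) * (-Vbound) + (S y - L_S * (C * (T - t) + Real.sqrt ν * ‖W T - W t‖)), ?_⟩
    rintro r ⟨u, ⟨hu, hub⟩, rfl⟩
    exact action_lower hn ht0 htT hW hVc hVbdd hSlip hLS hu hub
  have key : ∀ y y' : EuclideanSpace ℝ (Fin n),
      value T ν C W V S t y - value T ν C W V S t y' ≤ (L_V * (T - t) + L_S) * ‖y - y'‖ := by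
    intro y y'
    unfold value
    have h1 : sInf {r | ∃ u, IsAdmissible C u ∧ r = action T ν W V S t y u}
        - (L_V * (T - t) + L_S) * ‖y - y'‖
        ≤ sInf {r | ∃ u, IsAdmissible C u ∧ r = action T ν W V S t y' u} := by
      apply le_csInf (hne y')
      rintro r ⟨u, ⟨hu, hub⟩, rfl⟩
      have hle : sInf {r | ∃ u, IsAdmissible C u ∧ r = action T ν W V S t y u}
          ≤ action T ν W V S t y u := csInf_le (hbdd y) ⟨u, ⟨hu, hub⟩, rfl⟩
      have hd := action_diff (ν := ν) hn ht0 htT hW hVc hVlip hVbdd hSlip hu hub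
        (x := y) (x' := y')
      have := abs_le.1 hd
      linarith [this.1, this.2]
    linarith
  have h1 := key x x'
  have h2 := key x' x
  rw [norm_sub_rev] at h2
  rw [abs_sub_le_iff]
  exact ⟨h1, h2⟩
end

section
/- (Existence, subsolution part.) Assume C ≥ sup over (s₀,x₀) appearing below of the relevant gradient bound, i.e. C is large enough that C ≥ ‖∇φ‖_∞ for the test functions considered. Then the pathwise value function U is a pathwise viscosity subsolution of the stochastic HJB equation dv = −√ν ∇v ∘ dW(s) + (V(x) − ‖∇v‖²/2) ds with terminal data S: U is upper semicontinuous and bounded above, U(T,·) ≤ S, and whenever φ ∈ C²_b(ℝⁿ) with ‖∇φ‖_∞ ≤ C, g ∈ C¹([0,T]) and (s,x) ↦ U(s,x) − Φ_φ(s,x) − g(s) attains a local maximum at (s₀,x₀) ∈ (0,T) × ℝⁿ, then −g′(s₀) ≤ V(x₀) − ‖∇φ(x₀ + √ν(W(T) − W(s₀)))‖²/2. -/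
open MeasureTheory Set

/-- `φ ∈ C²_b`: twice continuously differentiable with `φ` and its first two derivatives
bounded. -/
def IsC2b {E : Type*} [NormedAddCommGroup E] [NormedSpace ℝ E] (φ : E → ℝ) : Prop :=
  ContDiff ℝ 2 φ ∧ ∃ M : ℝ, ∀ y,
    |φ y| ≤ M ∧ ‖fderiv ℝ φ y‖ ≤ M ∧ ‖fderiv ℝ (fderiv ℝ φ) y‖ ≤ M

lemma lipCont {E : Type*} [NormedAddCommGroup E] {f : E → ℝ} {L : ℝ}
    (h : ∀ y y', |f y - f y'| ≤ L * ‖y - y'‖) : Continuous f := by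
  refine LipschitzWith.continuous (K := Real.toNNReal L) (LipschitzWith.of_dist_le_mul ?_)
  intro x y
  have := h x y
  rw [Real.dist_eq, dist_eq_norm]
  exact this.trans (mul_le_mul_of_nonneg_right (Real.le_coe_toNNReal L) (norm_nonneg _))

lemma bddIntInt {n : ℕ} {C : ℝ} {u : ℝ → EuclideanSpace ℝ (Fin n)}
    (hu : Measurable u) (hb : ∀ s, ‖u s‖ ≤ C) (a b : ℝ) :
    IntervalIntegrable u volume a b := by
  rw [intervalIntegrable_iff]
  refine Integrable.mono' (g := fun _ => C) ?_ hu.aestronglyMeasurable.restrict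
    (ae_of_all _ hb)
  exact integrableOn_const measure_Ioc_lt_top.ne

lemma primCont {n : ℕ} {C : ℝ} {u : ℝ → EuclideanSpace ℝ (Fin n)}
    (hu : Measurable u) (hb : ∀ s, ‖u s‖ ≤ C) (t : ℝ) :
    Continuous fun r => ∫ s in t..r, u s :=
  intervalIntegral.continuous_primitive (fun a b => bddIntInt hu hb a b) t

lemma ctrlAESM {n : ℕ} {T ν C : ℝ} {W : ℝ → EuclideanSpace ℝ (Fin n)}
    (hW : ContinuousOn W (Icc 0 T)) {u : ℝ → EuclideanSpace ℝ (Fin n)}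
    (hu : Measurable u) (hb : ∀ s, ‖u s‖ ≤ C) (t : ℝ) (x : EuclideanSpace ℝ (Fin n))
    {s : Set ℝ} (hs : MeasurableSet s) (hsub : s ⊆ Icc 0 T) :
    AEStronglyMeasurable (fun r => ctrlPath ν W t x u r) (volume.restrict s) := by
  unfold ctrlPath
  have hWm : AEStronglyMeasurable W (volume.restrict s) :=
    (hW.mono hsub).aestronglyMeasurable hs
  exact ((aestronglyMeasurable_const.add
    ((primCont hu hb t).aestronglyMeasurable.restrict)).add
    ((hWm.sub aestronglyMeasurable_const).const_smul (Real.sqrt ν)))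

lemma integrandIntInt {n : ℕ} {T ν C Vbound : ℝ} {W : ℝ → EuclideanSpace ℝ (Fin n)}
    (hW : ContinuousOn W (Icc 0 T)) {V : EuclideanSpace ℝ (Fin n) → ℝ}
    (hV : Continuous V) (hVbdd : ∀ y, |V y| ≤ Vbound)
    {u : ℝ → EuclideanSpace ℝ (Fin n)} (hu : Measurable u) (hb : ∀ s, ‖u s‖ ≤ C)
    (t : ℝ) (x : EuclideanSpace ℝ (Fin n)) {a b : ℝ} (hsub : Set.uIoc a b ⊆ Icc 0 T) :
    IntervalIntegrable (fun r => ‖u r‖ ^ 2 / 2 + V (ctrlPath ν W t x u r)) volume a b := by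
  have hC0 : 0 ≤ C := (norm_nonneg _).trans (hb 0)
  rw [intervalIntegrable_iff]
  refine Integrable.mono' (g := fun _ => C ^ 2 / 2 + Vbound)
    (integrableOn_const measure_Ioc_lt_top.ne) ?_ (ae_of_all _ ?_)
  · exact (((hu.norm.pow_const 2).div_const 2).aestronglyMeasurable.restrict).add
      (hV.comp_aestronglyMeasurable (ctrlAESM hW hu hb t x measurableSet_uIoc hsub))
  · intro r
    have h1 : ‖u r‖ ^ 2 ≤ C ^ 2 := by
      have := hb r
      nlinarith [norm_nonneg (u r)]
    have h2 := hVbdd (ctrlPath ν W t x u r)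
    rw [Real.norm_eq_abs, abs_le]
    obtain ⟨hl, hr⟩ := abs_le.mp h2
    constructor <;> nlinarith [sq_nonneg ‖u r‖]

lemma integrandBound {n : ℕ} {C Vbound : ℝ} {u : ℝ → EuclideanSpace ℝ (Fin n)}
    (hb : ∀ s, ‖u s‖ ≤ C) {V : EuclideanSpace ℝ (Fin n) → ℝ}
    (hVbdd : ∀ y, |V y| ≤ Vbound) (r : ℝ) (z : EuclideanSpace ℝ (Fin n)) :
    |‖u r‖ ^ 2 / 2 + V z| ≤ C ^ 2 / 2 + Vbound := by
  have h1 : ‖u r‖ ^ 2 ≤ C ^ 2 := by nlinarith [norm_nonneg (u r), hb r]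
  obtain ⟨hl, hr⟩ := abs_le.mp (hVbdd z)
  rw [abs_le]
  constructor <;> nlinarith [sq_nonneg ‖u r‖]

lemma uIocSub {T a b : ℝ} (ha : a ∈ Icc 0 T) (hb : b ∈ Icc 0 T) :
    Set.uIoc a b ⊆ Icc (0:ℝ) T :=
  (Set.Ioc_subset_Icc_self).trans (Set.uIcc_subset_Icc ha hb)

lemma actionLB {n : ℕ} {T ν C Vbound Sbound : ℝ}
    {W : ℝ → EuclideanSpace ℝ (Fin n)} (hW : ContinuousOn W (Icc 0 T))
    {V S : EuclideanSpace ℝ (Fin n) → ℝ} (hV : Continuous V)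
    (hVbdd : ∀ y, |V y| ≤ Vbound) (hSbdd : ∀ y, |S y| ≤ Sbound)
    {t : ℝ} (ht : t ∈ Icc 0 T) (x : EuclideanSpace ℝ (Fin n))
    {u : ℝ → EuclideanSpace ℝ (Fin n)} (hu : IsAdmissible C u) :
    -(T * Vbound + Sbound) ≤ action T ν W V S t x u := by
  obtain ⟨hum, hub⟩ := hu
  have hVb0 : 0 ≤ Vbound := (abs_nonneg _).trans (hVbdd 0)
  have hint := integrandIntInt (ν := ν) hW hV hVbdd hum hub t x
    (a := t) (b := T) (uIocSub ht (by constructor <;> simp [ht.1.trans ht.2, le_refl]))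
  have h1 : (-((T - t) * Vbound)) ≤ ∫ s in t..T, (‖u s‖ ^ 2 / 2 + V (ctrlPath ν W t x u s)) := by
    have := intervalIntegral.integral_mono_on (μ := volume) (f := fun _ => -Vbound)
      (g := fun s => ‖u s‖ ^ 2 / 2 + V (ctrlPath ν W t x u s)) ht.2
      (intervalIntegrable_const) hint ?_
    · simpa using this
    · intro s _
      have := abs_le.mp (hVbdd (ctrlPath ν W t x u s))
      nlinarith [sq_nonneg ‖u s‖]
  have h2 := abs_le.mp (hSbdd (ctrlPath ν W t x u T))
  unfold action
  nlinarith [ht.1, ht.2, hVb0]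

lemma valueBddBelow {n : ℕ} {T ν C Vbound Sbound : ℝ}
    {W : ℝ → EuclideanSpace ℝ (Fin n)} (hW : ContinuousOn W (Icc 0 T))
    {V S : EuclideanSpace ℝ (Fin n) → ℝ} (hV : Continuous V)
    (hVbdd : ∀ y, |V y| ≤ Vbound) (hSbdd : ∀ y, |S y| ≤ Sbound)
    {t : ℝ} (ht : t ∈ Icc 0 T) (x : EuclideanSpace ℝ (Fin n)) :
    BddBelow {r | ∃ u : ℝ → EuclideanSpace ℝ (Fin n),
      IsAdmissible C u ∧ r = action T ν W V S t x u} := by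
  refine ⟨-(T * Vbound + Sbound), ?_⟩
  rintro r ⟨u, hu, rfl⟩
  exact actionLB hW hV hVbdd hSbdd ht x hu

lemma zeroAdm {n : ℕ} {C : ℝ} (hC : 0 < C) :
    IsAdmissible C (fun _ : ℝ => (0 : EuclideanSpace ℝ (Fin n))) :=
  ⟨measurable_const, fun _ => by simp [hC.le]⟩

lemma value_le_action {n : ℕ} {T ν C Vbound Sbound : ℝ}
    {W : ℝ → EuclideanSpace ℝ (Fin n)} (hW : ContinuousOn W (Icc 0 T))
    {V S : EuclideanSpace ℝ (Fin n) → ℝ} (hV : Continuous V)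
    (hVbdd : ∀ y, |V y| ≤ Vbound) (hSbdd : ∀ y, |S y| ≤ Sbound)
    {t : ℝ} (ht : t ∈ Icc 0 T) (x : EuclideanSpace ℝ (Fin n))
    {u : ℝ → EuclideanSpace ℝ (Fin n)} (hu : IsAdmissible C u) :
    value T ν C W V S t x ≤ action T ν W V S t x u :=
  csInf_le (valueBddBelow hW hV hVbdd hSbdd ht x) ⟨u, hu, rfl⟩

lemma le_value {n : ℕ} {T ν C : ℝ} (hC : 0 < C)
    {W : ℝ → EuclideanSpace ℝ (Fin n)}
    {V S : EuclideanSpace ℝ (Fin n) → ℝ}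
    (t : ℝ) (x : EuclideanSpace ℝ (Fin n)) {c : ℝ}
    (h : ∀ u : ℝ → EuclideanSpace ℝ (Fin n), IsAdmissible C u →
      c ≤ action T ν W V S t x u) :
    c ≤ value T ν C W V S t x := by
  refine le_csInf ⟨_, ⟨_, zeroAdm hC, rfl⟩⟩ ?_
  rintro r ⟨u, hu, rfl⟩
  exact h u hu

lemma ctrl_shift {n : ℕ} {ν C : ℝ} {W : ℝ → EuclideanSpace ℝ (Fin n)}
    {u : ℝ → EuclideanSpace ℝ (Fin n)} (hu : Measurable u) (hb : ∀ s, ‖u s‖ ≤ C)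
    (t t' : ℝ) (x x' : EuclideanSpace ℝ (Fin n)) (r : ℝ) :
    ctrlPath ν W t x u r = ctrlPath ν W t' x' u r +
      ((x - x') + (∫ s in t..t', u s) + Real.sqrt ν • (W t' - W t)) := by
  unfold ctrlPath
  have hsplit : (∫ s in t..t', u s) + (∫ s in t'..r, u s) = ∫ s in t..r, u s :=
    intervalIntegral.integral_add_adjacent_intervals (bddIntInt hu hb t t') (bddIntInt hu hb t' r)
  have hWs : Real.sqrt ν • (W r - W t) =
      Real.sqrt ν • (W r - W t') + Real.sqrt ν • (W t' - W t) := by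
    rw [← smul_add]; congr 1; abel
  rw [← hsplit, hWs]; abel

lemma action_shift {n : ℕ} {T ν C L_V L_S Vbound : ℝ} (hν : 0 ≤ ν)
    {W : ℝ → EuclideanSpace ℝ (Fin n)} (hW : ContinuousOn W (Icc 0 T))
    {V S : EuclideanSpace ℝ (Fin n) → ℝ}
    (hVlip : ∀ y y', |V y - V y'| ≤ L_V * ‖y - y'‖)
    (hVbdd : ∀ y, |V y| ≤ Vbound)
    (hSlip : ∀ y y', |S y - S y'| ≤ L_S * ‖y - y'‖)
    (hLV : 0 ≤ L_V) (hLS : 0 ≤ L_S)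
    {t t' : ℝ} (ht : t ∈ Icc 0 T) (ht' : t' ∈ Icc 0 T) (htt' : t ≤ t')
    (x x' : EuclideanSpace ℝ (Fin n))
    {u : ℝ → EuclideanSpace ℝ (Fin n)} (hu : IsAdmissible C u) :
    |action T ν W V S t x u - action T ν W V S t' x' u| ≤
      (C ^ 2 / 2 + Vbound) * (t' - t) +
      (L_V * T + L_S) * (‖x - x'‖ + C * (t' - t) + Real.sqrt ν * ‖W t' - W t‖) := by
  obtain ⟨hum, hub⟩ := hu
  have hV : Continuous V := lipCont hVlip
  have hTmem : T ∈ Icc (0:ℝ) T := ⟨ht.1.trans ht.2, le_refl T⟩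
  set e := (x - x') + (∫ s in t..t', u s) + Real.sqrt ν • (W t' - W t) with he_def
  set D := ‖x - x'‖ + C * (t' - t) + Real.sqrt ν * ‖W t' - W t‖ with hD_def
  have hce : ∀ r, ctrlPath ν W t x u r = ctrlPath ν W t' x' u r + e :=
    fun r => ctrl_shift hum hub t t' x x' r
  have he : ‖e‖ ≤ D := by
    have h1 : ‖∫ s in t..t', u s‖ ≤ C * (t' - t) := by
      have := intervalIntegral.norm_integral_le_of_norm_le_const (C := C)
        (f := u) (a := t) (b := t') (fun s _ => hub s)
      rwa [abs_of_nonneg (sub_nonneg.2 htt')] at this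
    have h2 : ‖Real.sqrt ν • (W t' - W t)‖ = Real.sqrt ν * ‖W t' - W t‖ := by
      rw [norm_smul, Real.norm_eq_abs, abs_of_nonneg (Real.sqrt_nonneg ν)]
    calc ‖e‖ ≤ ‖x - x' + (∫ s in t..t', u s)‖ + ‖Real.sqrt ν • (W t' - W t)‖ := norm_add_le _ _
    _ ≤ (‖x - x'‖ + ‖∫ s in t..t', u s‖) + ‖Real.sqrt ν • (W t' - W t)‖ := by
        gcongr; exact norm_add_le _ _
    _ ≤ D := by rw [h2, hD_def]; gcongr
  have hD0 : 0 ≤ D := (norm_nonneg e).trans he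
  set f := fun r => ‖u r‖ ^ 2 / 2 + V (ctrlPath ν W t x u r) with hf_def
  set f' := fun r => ‖u r‖ ^ 2 / 2 + V (ctrlPath ν W t' x' u r) with hf'_def
  have hint1 : IntervalIntegrable f volume t t' :=
    integrandIntInt hW hV hVbdd hum hub t x (uIocSub ht ht')
  have hint2 : IntervalIntegrable f volume t' T :=
    integrandIntInt hW hV hVbdd hum hub t x (uIocSub ht' hTmem)
  have hint2' : IntervalIntegrable f' volume t' T :=
    integrandIntInt hW hV hVbdd hum hub t' x' (uIocSub ht' hTmem)
  have hsplit : (∫ r in t..t', f r) + (∫ r in t'..T, f r) = ∫ r in t..T, f r :=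
    intervalIntegral.integral_add_adjacent_intervals hint1 hint2
  have hsub : (∫ r in t'..T, f r) - (∫ r in t'..T, f' r) = ∫ r in t'..T, (f r - f' r) :=
    (intervalIntegral.integral_sub hint2 hint2').symm
  have hb1 : |∫ r in t..t', f r| ≤ (C ^ 2 / 2 + Vbound) * (t' - t) := by
    have := intervalIntegral.norm_integral_le_of_norm_le_const (C := C ^ 2 / 2 + Vbound)
      (f := f) (a := t) (b := t') (fun s _ => by
        rw [Real.norm_eq_abs]; exact integrandBound hub hVbdd s _)
    rwa [abs_of_nonneg (sub_nonneg.2 htt'), Real.norm_eq_abs] at this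
  have hb2 : |∫ r in t'..T, (f r - f' r)| ≤ (L_V * ‖e‖) * (T - t') := by
    have := intervalIntegral.norm_integral_le_of_norm_le_const (C := L_V * ‖e‖)
      (f := fun r => f r - f' r) (a := t') (b := T) (fun s _ => by
        rw [Real.norm_eq_abs, hf_def, hf'_def]
        simp only []
        have : ‖u s‖ ^ 2 / 2 + V (ctrlPath ν W t x u s) -
            (‖u s‖ ^ 2 / 2 + V (ctrlPath ν W t' x' u s)) =
            V (ctrlPath ν W t x u s) - V (ctrlPath ν W t' x' u s) := by ring
        rw [this, hce s]
        calc |V (ctrlPath ν W t' x' u s + e) - V (ctrlPath ν W t' x' u s)| ≤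
            L_V * ‖ctrlPath ν W t' x' u s + e - ctrlPath ν W t' x' u s‖ := hVlip _ _
        _ = L_V * ‖e‖ := by rw [add_sub_cancel_left])
    rwa [abs_of_nonneg (sub_nonneg.2 ht'.2), Real.norm_eq_abs] at this
  have hb3 : |S (ctrlPath ν W t x u T) - S (ctrlPath ν W t' x' u T)| ≤ L_S * ‖e‖ := by
    rw [hce T]
    calc |S (ctrlPath ν W t' x' u T + e) - S (ctrlPath ν W t' x' u T)| ≤
        L_S * ‖ctrlPath ν W t' x' u T + e - ctrlPath ν W t' x' u T‖ := hSlip _ _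
    _ = L_S * ‖e‖ := by rw [add_sub_cancel_left]
  have hdecomp : action T ν W V S t x u - action T ν W V S t' x' u =
      (∫ r in t..t', f r) + (∫ r in t'..T, (f r - f' r)) +
      (S (ctrlPath ν W t x u T) - S (ctrlPath ν W t' x' u T)) := by
    unfold action
    rw [← hsub, ← hsplit]; ring
  rw [hdecomp]
  have htri : |(∫ r in t..t', f r) + (∫ r in t'..T, (f r - f' r)) +
      (S (ctrlPath ν W t x u T) - S (ctrlPath ν W t' x' u T))| ≤
      |∫ r in t..t', f r| + |∫ r in t'..T, (f r - f' r)| +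
      |S (ctrlPath ν W t x u T) - S (ctrlPath ν W t' x' u T)| :=
    (abs_add_le _ _).trans (by gcongr; exact abs_add_le _ _)
  have hT0 : 0 ≤ T := ht.1.trans ht.2
  have hne : 0 ≤ ‖e‖ := norm_nonneg e
  have h4 : L_V * ‖e‖ * (T - t') ≤ (L_V * T) * ‖e‖ := by
    nlinarith [mul_nonneg (mul_nonneg hLV hne) ht'.1]
  have h5 : (L_V * T + L_S) * ‖e‖ ≤ (L_V * T + L_S) * D :=
    mul_le_mul_of_nonneg_left he (by positivity)
  clear_value e D f f'
  nlinarith [htri, hb1, hb2, hb3, h4, h5]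

lemma value_shift {n : ℕ} {T ν C L_V L_S Vbound Sbound : ℝ} (hν : 0 ≤ ν) (hC : 0 < C)
    {W : ℝ → EuclideanSpace ℝ (Fin n)} (hW : ContinuousOn W (Icc 0 T))
    {V S : EuclideanSpace ℝ (Fin n) → ℝ}
    (hVlip : ∀ y y', |V y - V y'| ≤ L_V * ‖y - y'‖)
    (hVbdd : ∀ y, |V y| ≤ Vbound)
    (hSlip : ∀ y y', |S y - S y'| ≤ L_S * ‖y - y'‖)
    (hSbdd : ∀ y, |S y| ≤ Sbound)
    (hLV : 0 ≤ L_V) (hLS : 0 ≤ L_S)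
    {t t' : ℝ} (ht : t ∈ Icc 0 T) (ht' : t' ∈ Icc 0 T) (htt' : t ≤ t')
    (x x' : EuclideanSpace ℝ (Fin n)) :
    |value T ν C W V S t x - value T ν C W V S t' x'| ≤
      (C ^ 2 / 2 + Vbound) * (t' - t) +
      (L_V * T + L_S) * (‖x - x'‖ + C * (t' - t) + Real.sqrt ν * ‖W t' - W t‖) := by
  have hV : Continuous V := lipCont hVlip
  set B := (C ^ 2 / 2 + Vbound) * (t' - t) +
      (L_V * T + L_S) * (‖x - x'‖ + C * (t' - t) + Real.sqrt ν * ‖W t' - W t‖) with hB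
  clear_value B
  rw [abs_sub_le_iff]
  constructor
  · have : value T ν C W V S t x - B ≤ value T ν C W V S t' x' := by
      apply le_value hC
      intro u hu
      have h1 := value_le_action (ν := ν) hW hV hVbdd hSbdd ht x hu
      have h2 := (abs_sub_le_iff.mp (action_shift hν hW hVlip hVbdd hSlip hLV hLS
        ht ht' htt' x x' hu)).1
      linarith [hB]
    linarith
  · have : value T ν C W V S t' x' - B ≤ value T ν C W V S t x := by
      apply le_value hC
      intro u hu
      have h1 := value_le_action (ν := ν) hW hV hVbdd hSbdd ht' x' hu
      have h2 := (abs_sub_le_iff.mp (action_shift hν hW hVlip hVbdd hSlip hLV hLS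
        ht ht' htt' x x' hu)).2
      linarith [hB]
    linarith

lemma value_ub {n : ℕ} {T ν C Vbound Sbound : ℝ} (hC : 0 < C)
    {W : ℝ → EuclideanSpace ℝ (Fin n)} (hW : ContinuousOn W (Icc 0 T))
    {V S : EuclideanSpace ℝ (Fin n) → ℝ} (hV : Continuous V)
    (hVbdd : ∀ y, |V y| ≤ Vbound) (hSbdd : ∀ y, |S y| ≤ Sbound)
    {t : ℝ} (ht : t ∈ Icc 0 T) (x : EuclideanSpace ℝ (Fin n)) :
    value T ν C W V S t x ≤ T * Vbound + Sbound := by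
  have hVb0 : 0 ≤ Vbound := (abs_nonneg _).trans (hVbdd 0)
  refine (value_le_action (ν := ν) hW hV hVbdd hSbdd ht x (zeroAdm hC)).trans ?_
  have hTmem : T ∈ Icc (0:ℝ) T := ⟨ht.1.trans ht.2, le_refl T⟩
  have hint := integrandIntInt (ν := ν) hW hV hVbdd measurable_const
    (fun _ => by simp [hC.le] : ∀ s, ‖(fun _ : ℝ => (0 : EuclideanSpace ℝ (Fin n))) s‖ ≤ C)
    t x (uIocSub ht hTmem)
  have h1 : (∫ s in t..T, (‖(0 : EuclideanSpace ℝ (Fin n))‖ ^ 2 / 2 +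
      V (ctrlPath ν W t x (fun _ => 0) s))) ≤ (T - t) * Vbound := by
    have := intervalIntegral.integral_mono_on (μ := volume)
      (g := fun _ => Vbound) ht.2 hint intervalIntegrable_const ?_
    · simpa [mul_comm] using this
    · intro s _
      have := abs_le.mp (hVbdd (ctrlPath ν W t x (fun _ => 0) s))
      simp only [norm_zero]
      nlinarith
  have h2 := abs_le.mp (hSbdd (ctrlPath ν W t x (fun _ => 0) T))
  unfold action
  simp only [norm_zero] at h1 ⊢
  nlinarith [ht.1, ht.2]

lemma value_terminal {n : ℕ} {T ν C Vbound Sbound : ℝ} (hC : 0 < C) (hT : 0 ≤ T)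
    {W : ℝ → EuclideanSpace ℝ (Fin n)} (hW : ContinuousOn W (Icc 0 T))
    {V S : EuclideanSpace ℝ (Fin n) → ℝ} (hV : Continuous V)
    (hVbdd : ∀ y, |V y| ≤ Vbound) (hSbdd : ∀ y, |S y| ≤ Sbound)
    (y : EuclideanSpace ℝ (Fin n)) :
    value T ν C W V S T y ≤ S y := by
  have hTmem : T ∈ Icc (0:ℝ) T := ⟨hT, le_refl T⟩
  have := value_le_action (ν := ν) hW hV hVbdd hSbdd hTmem y (zeroAdm hC)
  have hact : action T ν W V S T y (fun _ => 0) = S y := by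
    unfold action ctrlPath
    simp
  rwa [hact] at this

lemma value_usc {n : ℕ} {T ν C L_V L_S Vbound Sbound : ℝ} (hν : 0 ≤ ν) (hC : 0 < C)
    {W : ℝ → EuclideanSpace ℝ (Fin n)} (hW : ContinuousOn W (Icc 0 T))
    {V S : EuclideanSpace ℝ (Fin n) → ℝ}
    (hVlip : ∀ y y', |V y - V y'| ≤ L_V * ‖y - y'‖)
    (hVbdd : ∀ y, |V y| ≤ Vbound)
    (hSlip : ∀ y y', |S y - S y'| ≤ L_S * ‖y - y'‖)
    (hSbdd : ∀ y, |S y| ≤ Sbound)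
    (hLV : 0 ≤ L_V) (hLS : 0 ≤ L_S) :
    UpperSemicontinuousOn (fun p : ℝ × EuclideanSpace ℝ (Fin n) =>
      value T ν C W V S p.1 p.2) (Icc 0 T ×ˢ (univ : Set (EuclideanSpace ℝ (Fin n)))) := by
  intro p₀ hp₀ y hy
  have ht₀ : p₀.1 ∈ Icc 0 T := hp₀.1
  set K₁ := C ^ 2 / 2 + Vbound with hK₁
  set K₂ := L_V * T + L_S with hK₂
  set sset := Icc (0:ℝ) T ×ˢ (univ : Set (EuclideanSpace ℝ (Fin n))) with hsset
  set h : ℝ × EuclideanSpace ℝ (Fin n) → ℝ := fun p =>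
    K₁ * |p.1 - p₀.1| + K₂ * (‖p.2 - p₀.2‖ + C * |p.1 - p₀.1| +
      Real.sqrt ν * ‖W p.1 - W p₀.1‖) with hh
  clear_value K₁ K₂
  have hb : ∀ p ∈ sset, value T ν C W V S p.1 p.2 ≤ value T ν C W V S p₀.1 p₀.2 + h p := by
    intro p hp
    have ht : p.1 ∈ Icc 0 T := hp.1
    rcases le_total p.1 p₀.1 with hle | hle
    · have := (abs_sub_le_iff.mp (value_shift hν hC hW hVlip hVbdd hSlip hSbdd hLV hLS
        ht ht₀ hle p.2 p₀.2)).1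
      have habs : |p.1 - p₀.1| = p₀.1 - p.1 := by
        rw [abs_sub_comm, abs_of_nonneg (sub_nonneg.2 hle)]
      have hnr : ‖W p₀.1 - W p.1‖ = ‖W p.1 - W p₀.1‖ := norm_sub_rev _ _
      rw [hh]; simp only []
      rw [habs, hK₁, hK₂]
      rw [hnr] at this
      linarith
    · have := (abs_sub_le_iff.mp (value_shift hν hC hW hVlip hVbdd hSlip hSbdd hLV hLS
        ht₀ ht hle p₀.2 p.2)).2
      have habs : |p.1 - p₀.1| = p.1 - p₀.1 := abs_of_nonneg (sub_nonneg.2 hle)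
      have hnr : ‖p₀.2 - p.2‖ = ‖p.2 - p₀.2‖ := norm_sub_rev _ _
      rw [hh]; simp only []
      rw [habs, hK₁, hK₂]
      rw [hnr] at this
      linarith
  have hWc : ContinuousWithinAt (fun p : ℝ × EuclideanSpace ℝ (Fin n) => W p.1) sset p₀ :=
    (hW p₀.1 ht₀).comp continuousWithinAt_fst (fun p hp => hp.1)
  have hcont : ContinuousWithinAt h sset p₀ := by
    apply ContinuousWithinAt.add
    · exact (continuous_const.mul ((continuous_fst.sub continuous_const).abs)).continuousWithinAt
    · apply ContinuousWithinAt.mul continuousWithinAt_const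
      apply ContinuousWithinAt.add
      · exact (((continuous_const : Continuous fun _ : ℝ × EuclideanSpace ℝ (Fin n) => C).mul
          ((continuous_fst.sub (continuous_const : Continuous fun _ : ℝ × EuclideanSpace ℝ (Fin n) => p₀.1)).abs)).add
          ((continuous_snd.sub (continuous_const : Continuous fun _ : ℝ × EuclideanSpace ℝ (Fin n) => p₀.2)).norm)).continuousWithinAt.mono (fun _ h => h)
          |>.congr (fun _ _ => by simp; ring) (by simp)
      · exact continuousWithinAt_const.mul (hWc.sub continuousWithinAt_const).norm
  have hzero : h p₀ = 0 := by rw [hh]; simp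
  have hev : ∀ᶠ p in nhdsWithin p₀ sset, h p < y - value T ν C W V S p₀.1 p₀.2 := by
    have : Filter.Tendsto h (nhdsWithin p₀ sset) (nhds 0) := by
      have := hcont; rwa [ContinuousWithinAt, hzero] at this
    exact this.eventually_lt_const (by linarith)
  filter_upwards [hev, self_mem_nhdsWithin] with p h1 h2
  have := hb p h2
  linarith

lemma ae_ne_point (s : ℝ) : ∀ᵐ ρ ∂(volume : Measure ℝ), ρ ≠ s := by
  rw [ae_iff]
  simpa using Real.volume_singleton

lemma action_split {n : ℕ} {T ν C Vbound : ℝ}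
    {W : ℝ → EuclideanSpace ℝ (Fin n)} (hW : ContinuousOn W (Icc 0 T))
    {V S : EuclideanSpace ℝ (Fin n) → ℝ} (hV : Continuous V)
    (hVbdd : ∀ y, |V y| ≤ Vbound)
    {s₀ s : ℝ} (hs₀ : s₀ ∈ Icc 0 T) (hs : s ∈ Icc 0 T) (hss : s₀ ≤ s)
    (x₀ : EuclideanSpace ℝ (Fin n)) {a : EuclideanSpace ℝ (Fin n)} (ha : ‖a‖ ≤ C)
    {u : ℝ → EuclideanSpace ℝ (Fin n)} (hu : IsAdmissible C u) :
    action T ν W V S s₀ x₀ (fun r => if r < s then a else u r) =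
      (∫ r in s₀..s, (‖a‖ ^ 2 / 2 + V (ctrlPath ν W s₀ x₀ (fun _ => a) r))) +
      action T ν W V S s (ctrlPath ν W s₀ x₀ (fun _ => a) s) u := by
  have hTmem : T ∈ Icc (0:ℝ) T := ⟨hs₀.1.trans hs₀.2, le_refl T⟩
  set uh := fun r => if r < s then a else u r with huh
  have huhm : Measurable uh := Measurable.ite measurableSet_Iio measurable_const hu.1
  have huhb : ∀ r, ‖uh r‖ ≤ C := by
    intro r
    by_cases h : r < s
    · simp only [huh, h, if_true]; exact ha
    · simp only [huh, h, if_false]; exact hu.2 r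
  -- primitive of uh up to r ≤ s is (r - s₀) • a
  have hprim : ∀ r, r ≤ s → (∫ ρ in s₀..r, uh ρ) = (r - s₀) • a := by
    intro r hr
    have : (∫ ρ in s₀..r, uh ρ) = ∫ ρ in s₀..r, a := by
      apply intervalIntegral.integral_congr_ae
      filter_upwards [ae_ne_point s] with ρ hρ hmem
      have hle : ρ ≤ max s₀ r := (Set.uIoc_subset_uIcc hmem).2
      have : ρ < s := lt_of_le_of_ne (hle.trans (max_le (hss) hr)) hρ
      simp [huh, this]
    rw [this, intervalIntegral.integral_const]
  have hprimA : ∀ r : ℝ, (∫ ρ in s₀..r, (fun _ => a) ρ) = (r - s₀) • a := by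
    intro r; rw [intervalIntegral.integral_const]
  -- controlled paths agree with the constant path up to time s
  have hZ : ∀ r, r ≤ s → ctrlPath ν W s₀ x₀ uh r = ctrlPath ν W s₀ x₀ (fun _ => a) r := by
    intro r hr
    unfold ctrlPath
    rw [hprim r hr, hprimA r]
  -- primitive beyond s
  have hprim2 : ∀ r, s ≤ r → (∫ ρ in s₀..r, uh ρ) = (s - s₀) • a + ∫ ρ in s..r, u ρ := by
    intro r hr
    rw [← intervalIntegral.integral_add_adjacent_intervals
      (bddIntInt huhm huhb s₀ s) (bddIntInt huhm huhb s r), hprim s (le_refl s)]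
    congr 1
    apply intervalIntegral.integral_congr
    intro ρ hρ
    have : s ≤ ρ := by
      rcases hρ with ⟨h1, _⟩
      exact le_trans (le_of_eq (min_eq_left hr).symm) h1
    simp [huh, not_lt.2 this]
  set z := ctrlPath ν W s₀ x₀ (fun _ => a) s with hz
  have hZ2 : ∀ r, s ≤ r → ctrlPath ν W s₀ x₀ uh r = ctrlPath ν W s z u r := by
    intro r hr
    unfold ctrlPath
    rw [hprim2 r hr, hz]
    unfold ctrlPath
    rw [hprimA s]
    have hWs : Real.sqrt ν • (W r - W s₀) =
        Real.sqrt ν • (W r - W s) + Real.sqrt ν • (W s - W s₀) := by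
      rw [← smul_add]; congr 1; abel
    rw [hWs]; abel
  -- split the action integral
  have hint1 : IntervalIntegrable (fun r => ‖uh r‖ ^ 2 / 2 + V (ctrlPath ν W s₀ x₀ uh r))
      volume s₀ s := integrandIntInt hW hV hVbdd huhm huhb s₀ x₀ (uIocSub hs₀ hs)
  have hint2 : IntervalIntegrable (fun r => ‖uh r‖ ^ 2 / 2 + V (ctrlPath ν W s₀ x₀ uh r))
      volume s T := integrandIntInt hW hV hVbdd huhm huhb s₀ x₀ (uIocSub hs hTmem)
  have hsplit := intervalIntegral.integral_add_adjacent_intervals hint1 hint2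
  have hpart1 : (∫ r in s₀..s, (‖uh r‖ ^ 2 / 2 + V (ctrlPath ν W s₀ x₀ uh r))) =
      ∫ r in s₀..s, (‖a‖ ^ 2 / 2 + V (ctrlPath ν W s₀ x₀ (fun _ => a) r)) := by
    apply intervalIntegral.integral_congr_ae
    filter_upwards [ae_ne_point s] with ρ hρ hmem
    have hle : ρ ≤ max s₀ s := (Set.uIoc_subset_uIcc hmem).2
    have hlt : ρ < s := lt_of_le_of_ne (hle.trans (max_le hss (le_refl s))) hρ
    rw [hZ ρ hlt.le]
    simp [huh, hlt]
  have hpart2 : (∫ r in s..T, (‖uh r‖ ^ 2 / 2 + V (ctrlPath ν W s₀ x₀ uh r))) =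
      ∫ r in s..T, (‖u r‖ ^ 2 / 2 + V (ctrlPath ν W s z u r)) := by
    apply intervalIntegral.integral_congr
    intro ρ hρ
    have hge : s ≤ ρ := by
      rcases hρ with ⟨h1, _⟩
      exact le_trans (le_of_eq (min_eq_left hs.2).symm) h1
    have h1 : uh ρ = u ρ := by simp [huh, not_lt.2 hge]
    simp only [hZ2 ρ hge, h1]
  have hterm : ctrlPath ν W s₀ x₀ uh T = ctrlPath ν W s z u T := hZ2 T hs.2
  unfold action
  rw [← hsplit, hpart1, hpart2, hterm]
  ring

lemma dpp {n : ℕ} {T ν C Vbound Sbound : ℝ} (hC : 0 < C)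
    {W : ℝ → EuclideanSpace ℝ (Fin n)} (hW : ContinuousOn W (Icc 0 T))
    {V S : EuclideanSpace ℝ (Fin n) → ℝ} (hV : Continuous V)
    (hVbdd : ∀ y, |V y| ≤ Vbound) (hSbdd : ∀ y, |S y| ≤ Sbound)
    {s₀ s : ℝ} (hs₀ : s₀ ∈ Icc 0 T) (hs : s ∈ Icc 0 T) (hss : s₀ ≤ s)
    (x₀ : EuclideanSpace ℝ (Fin n)) {a : EuclideanSpace ℝ (Fin n)} (ha : ‖a‖ ≤ C) :
    value T ν C W V S s₀ x₀ ≤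
      (∫ r in s₀..s, (‖a‖ ^ 2 / 2 + V (ctrlPath ν W s₀ x₀ (fun _ => a) r))) +
      value T ν C W V S s (ctrlPath ν W s₀ x₀ (fun _ => a) s) := by
  rw [← sub_le_iff_le_add']
  apply le_value hC
  intro u hu
  have huhadm : IsAdmissible C (fun r => if r < s then a else u r) := by
    refine ⟨Measurable.ite measurableSet_Iio measurable_const hu.1, ?_⟩
    intro r
    by_cases h : r < s
    · simp only [h, if_true]; exact ha
    · simp only [h, if_false]; exact hu.2 r
  have h1 := value_le_action (ν := ν) hW hV hVbdd hSbdd hs₀ x₀ huhadm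
  rw [action_split hW hV hVbdd hs₀ hs hss x₀ ha hu] at h1
  linarith

lemma fderiv_eq_inner_gradient {n : ℕ} (φ : EuclideanSpace ℝ (Fin n) → ℝ)
    (y v : EuclideanSpace ℝ (Fin n)) :
    fderiv ℝ φ y v = @inner ℝ _ _ (gradient φ y) v := by
  rw [gradient, ← InnerProductSpace.toDual_apply_apply,
    (InnerProductSpace.toDual ℝ (EuclideanSpace ℝ (Fin n))).apply_symm_apply]

lemma subsol_ineq {n : ℕ} (T ν C : ℝ) (hT : 0 < T) (hν : 0 < ν) (hC : 0 < C)
    (W : ℝ → EuclideanSpace ℝ (Fin n)) (hW : ContinuousOn W (Icc 0 T))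
    (V S : EuclideanSpace ℝ (Fin n) → ℝ) (Vbound Sbound : ℝ)
    (hV : Continuous V) (hVbdd : ∀ y, |V y| ≤ Vbound) (hSbdd : ∀ y, |S y| ≤ Sbound)
    (φ : EuclideanSpace ℝ (Fin n) → ℝ) (g : ℝ → ℝ) (s₀ : ℝ) (x₀ : EuclideanSpace ℝ (Fin n))
    (hφ : IsC2b φ) (hgrad : ∀ y, ‖gradient φ y‖ ≤ C) (hg : ContDiff ℝ 1 g)
    (hs₀ : s₀ ∈ Ioo (0 : ℝ) T)
    (hmax : IsLocalMax (fun p : ℝ × EuclideanSpace ℝ (Fin n) =>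
        value T ν C W V S p.1 p.2 - φ (p.2 + Real.sqrt ν • (W T - W p.1)) - g p.1) (s₀, x₀)) :
    -deriv g s₀ ≤ V x₀ - ‖gradient φ (x₀ + Real.sqrt ν • (W T - W s₀))‖ ^ 2 / 2 := by
  have hs₀I : s₀ ∈ Icc 0 T := ⟨hs₀.1.le, hs₀.2.le⟩
  set y₀ := x₀ + Real.sqrt ν • (W T - W s₀) with hy₀
  set a := -(gradient φ y₀) with ha_def
  have ha : ‖a‖ ≤ C := by rw [ha_def, norm_neg]; exact hgrad y₀
  have hφd : Differentiable ℝ φ := hφ.1.differentiable (by norm_num)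
  -- the constant-control path
  set Z : ℝ → EuclideanSpace ℝ (Fin n) := fun s => ctrlPath ν W s₀ x₀ (fun _ => a) s with hZ
  have hZeq : ∀ s, Z s = x₀ + (s - s₀) • a + Real.sqrt ν • (W s - W s₀) := by
    intro s; simp only [hZ, ctrlPath, intervalIntegral.integral_const]
  have hZ0 : Z s₀ = x₀ := by rw [hZeq]; simp
  -- continuity of Z at s₀
  have hWat : ContinuousAt W s₀ := hW.continuousAt (Icc_mem_nhds hs₀.1 hs₀.2)
  have hZcont : ContinuousAt Z s₀ := by
    rw [hZ]; unfold ctrlPath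
    exact (continuousAt_const.add ((primCont measurable_const (fun _ => ha) s₀).continuousAt)).add
      (((hWat.sub continuousAt_const).const_smul (Real.sqrt ν)))
  -- the test value function F
  set f : ℝ → ℝ := fun r => ‖a‖ ^ 2 / 2 + V (Z r) with hf
  set F : ℝ → ℝ := fun s => (∫ r in s₀..s, f r) + φ (y₀ + (s - s₀) • a) - φ y₀ + g s - g s₀
    with hF
  -- derivative of F at s₀
  have hfc : ContinuousAt f s₀ := continuousAt_const.add (hV.continuousAt.comp hZcont)
  have hd1 : HasDerivAt (fun s => ∫ r in s₀..s, f r) (f s₀) s₀ := by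
    apply intervalIntegral.integral_hasDerivAt_right
    · exact integrandIntInt hW hV hVbdd measurable_const (fun _ => ha) s₀ x₀
        (by rw [Set.uIoc, min_self, max_self, Set.Ioc_self]; exact empty_subset _)
    · refine ⟨Ioo 0 T, Ioo_mem_nhds hs₀.1 hs₀.2, ?_⟩
      exact (aestronglyMeasurable_const.add
        (hV.comp_aestronglyMeasurable (ctrlAESM hW measurable_const (fun _ => ha) s₀ x₀
          measurableSet_Ioo Ioo_subset_Icc_self)))
    · exact hfc
  have hγ : HasDerivAt (fun s : ℝ => y₀ + (s - s₀) • a) a s₀ := by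
    have h1 : HasDerivAt (fun s : ℝ => (s - s₀) • a) ((1:ℝ) • a) s₀ :=
      ((hasDerivAt_id s₀).sub_const s₀).smul_const a
    rw [one_smul] at h1
    exact h1.const_add y₀
  have hd2 : HasDerivAt (fun s => φ (y₀ + (s - s₀) • a)) (fderiv ℝ φ y₀ a) s₀ := by
    have hfd : HasFDerivAt φ (fderiv ℝ φ y₀) ((fun s : ℝ => y₀ + (s - s₀) • a) s₀) := by
      simpa using (hφd y₀).hasFDerivAt
    exact hfd.comp_hasDerivAt s₀ hγ
  have hd3 : HasDerivAt g (deriv g s₀) s₀ :=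
    ((hg.differentiable one_ne_zero) s₀).hasDerivAt
  have hdF : HasDerivAt F (f s₀ + fderiv ℝ φ y₀ a + deriv g s₀) s₀ := by
    rw [hF]
    exact (((hd1.add hd2).sub_const (φ y₀)).add hd3).sub_const (g s₀)
  have hF0 : F s₀ = 0 := by rw [hF]; simp
  -- F is nonnegative to the right of s₀
  have hright : ∀ᶠ s in nhdsWithin s₀ (Ioi s₀), 0 ≤ F s := by
    have htend : Filter.Tendsto (fun s => (s, Z s)) (nhdsWithin s₀ (Ioi s₀)) (nhds (s₀, x₀)) := by
      have : Filter.Tendsto (fun s => (s, Z s)) (nhds s₀) (nhds (s₀, Z s₀)) :=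
        (continuousAt_id.prodMk hZcont)
      rw [hZ0] at this
      exact this.mono_left nhdsWithin_le_nhds
    have hmax' := htend.eventually hmax
    have hlt : ∀ᶠ s in nhdsWithin s₀ (Ioi s₀), s < T :=
      ((isOpen_Iio.eventually_mem hs₀.2).filter_mono nhdsWithin_le_nhds)
    filter_upwards [hmax', hlt, self_mem_nhdsWithin] with s h1 h2 h3
    have hsI : s ∈ Icc 0 T := ⟨(hs₀.1.trans h3).le, h2.le⟩
    have hdpp := dpp (ν := ν) hC hW hV hVbdd hSbdd hs₀I hsI (le_of_lt h3) x₀ ha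
    -- rewrite the test-function argument
    have hkey : Z s + Real.sqrt ν • (W T - W s) = y₀ + (s - s₀) • a := by
      rw [hZeq, hy₀]
      have : Real.sqrt ν • (W s - W s₀) + Real.sqrt ν • (W T - W s) =
          Real.sqrt ν • (W T - W s₀) := by rw [← smul_add]; congr 1; abel
      rw [← this]; abel
    rw [hkey] at h1
    show (0:ℝ) ≤ (∫ r in s₀..s, f r) + φ (y₀ + (s - s₀) • a) - φ y₀ + g s - g s₀
    have : value T ν C W V S s (Z s) ≤ value T ν C W V S s₀ x₀ -
        φ y₀ - g s₀ + φ (y₀ + (s - s₀) • a) + g s := by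
      have h1' : value T ν C W V S s (Z s) - φ (y₀ + (s - s₀) • a) - g s ≤
          value T ν C W V S s₀ x₀ - φ (x₀ + Real.sqrt ν • (W T - W s₀)) - g s₀ := h1
      rw [← hy₀] at h1'
      linarith
    have hdpp' : value T ν C W V S s₀ x₀ ≤ (∫ r in s₀..s, f r) +
        value T ν C W V S s (Z s) := hdpp
    linarith
  -- conclude the derivative is nonnegative
  have hslope := hasDerivAt_iff_tendsto_slope.mp hdF
  have hge : 0 ≤ f s₀ + fderiv ℝ φ y₀ a + deriv g s₀ := by
    have hmono : nhdsWithin s₀ (Ioi s₀) ≤ nhdsWithin s₀ {s₀}ᶜ :=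
      nhdsWithin_mono s₀ (fun x hx => ne_of_gt hx)
    refine ge_of_tendsto (hslope.mono_left hmono) ?_
    filter_upwards [hright, self_mem_nhdsWithin] with s h1 h2
    rw [slope_def_field, hF0, sub_zero]
    have hpos : 0 < s - s₀ := sub_pos.2 h2
    exact div_nonneg h1 hpos.le
  -- unravel
  have hfs₀ : f s₀ = ‖a‖ ^ 2 / 2 + V x₀ := by show ‖a‖ ^ 2 / 2 + V (Z s₀) = _; rw [hZ0]
  have hinner : fderiv ℝ φ y₀ a = -‖gradient φ y₀‖ ^ 2 := by
    rw [fderiv_eq_inner_gradient, ha_def, inner_neg_right, real_inner_self_eq_norm_sq]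
  have hna : ‖a‖ = ‖gradient φ y₀‖ := by rw [ha_def, norm_neg]
  rw [hfs₀, hinner, hna] at hge
  linarith [hge]

/-- existence, subsolution part: for test functions `φ ∈ C²_b` with
`‖∇φ‖_∞ ≤ C`, the value function `U` is a pathwise viscosity subsolution of
`dv = −√ν ∇v ∘ dW + (V(x) − ‖∇v‖²/2) ds` with terminal data `S`:
it is bounded above and upper semicontinuous, `U(T,·) ≤ S`, and at any local maximum
`(s₀,x₀) ∈ (0,T) × ℝⁿ` of `U − Φ_φ − g` one has
`−g′(s₀) ≤ V(x₀) − ‖∇φ(x₀ + √ν(W(T) − W(s₀)))‖²/2`. -/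
theorem statement10
    (n : ℕ) (hn : 1 ≤ n) (T ν C L_V L_S Vbound Sbound : ℝ)
    (hT : 0 < T) (hν : 0 < ν) (hC : 0 < C)
    (W : ℝ → EuclideanSpace ℝ (Fin n)) (hW : ContinuousOn W (Icc 0 T))
    (V S : EuclideanSpace ℝ (Fin n) → ℝ)
    (hVlip : ∀ y y', |V y - V y'| ≤ L_V * ‖y - y'‖)
    (hVbdd : ∀ y, |V y| ≤ Vbound)
    (hSlip : ∀ y y', |S y - S y'| ≤ L_S * ‖y - y'‖)
    (hSbdd : ∀ y, |S y| ≤ Sbound) :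
    (∃ M : ℝ, ∀ s ∈ Icc (0 : ℝ) T, ∀ y, value T ν C W V S s y ≤ M) ∧
    UpperSemicontinuousOn (fun p : ℝ × EuclideanSpace ℝ (Fin n) => value T ν C W V S p.1 p.2)
      (Icc 0 T ×ˢ (univ : Set (EuclideanSpace ℝ (Fin n)))) ∧
    (∀ y, value T ν C W V S T y ≤ S y) ∧
    (∀ (φ : EuclideanSpace ℝ (Fin n) → ℝ) (g : ℝ → ℝ) (s₀ : ℝ) (x₀ : EuclideanSpace ℝ (Fin n)),
      IsC2b φ → (∀ y, ‖gradient φ y‖ ≤ C) → ContDiff ℝ 1 g → s₀ ∈ Ioo (0 : ℝ) T →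
      IsLocalMax (fun p : ℝ × EuclideanSpace ℝ (Fin n) =>
        value T ν C W V S p.1 p.2 - φ (p.2 + Real.sqrt ν • (W T - W p.1)) - g p.1) (s₀, x₀) →
      -deriv g s₀ ≤ V x₀ - ‖gradient φ (x₀ + Real.sqrt ν • (W T - W s₀))‖ ^ 2 / 2) := by
  have hV : Continuous V := lipCont hVlip
  have i0 : Fin n := ⟨0, hn⟩
  have hone : ‖(EuclideanSpace.single i0 (1:ℝ)) - 0‖ = 1 := by
    rw [sub_zero, EuclideanSpace.norm_single]; norm_num
  have hLV : 0 ≤ L_V := by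
    have h := hVlip (EuclideanSpace.single i0 (1:ℝ)) 0
    rw [hone, mul_one] at h
    exact (abs_nonneg _).trans h
  have hLS : 0 ≤ L_S := by
    have h := hSlip (EuclideanSpace.single i0 (1:ℝ)) 0
    rw [hone, mul_one] at h
    exact (abs_nonneg _).trans h
  refine ⟨⟨T * Vbound + Sbound, fun s hs y => value_ub hC hW hV hVbdd hSbdd hs y⟩,
    value_usc hν.le hC hW hVlip hVbdd hSlip hSbdd hLV hLS,
    fun y => value_terminal hC hT.le hW hV hVbdd hSbdd y, ?_⟩
  intro φ g s₀ x₀ hφ hgrad hg hs₀ hmax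
  exact subsol_ineq T ν C hT hν hC W hW V S Vbound Sbound hV hVbdd hSbdd
    φ g s₀ x₀ hφ hgrad hg hs₀ hmax
end
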